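/- Theorem (error analysis of the global first-order approximation). Fix dimensions d ≥ 1 and block size B ≥ 1, a finite set 𝒰 of unselected block indices, and a query q ∈ ℝ^d with ‖q‖₂ ≤ C_q for some constant C_q > 0. For each j ∈ 𝒰 let k_{j,1}, …, k_{j,B} ∈ ℝ^d be keys with centroid k̄_j = (1/B)·∑_{n=1}^B k_{j,n}, set α_j = exp(⟨q, k̄_j⟩/√d), let H_j be a real d×d matrix for each j ∈ 𝒰, let H̄ be a real d×d matrix, and set M = max_{j∈𝒰} ‖H_j − H̄‖₂ (operator norm). Let D > 0 be a real number (the attention denominator), set the tail mass τ = ∑_{j∈𝒰} ∑_{n=1}^B exp(⟨q, k_{j,n}⟩/√d), and assume τ ≤ D; set the tail fraction ρ = τ/D. Let N ∈ ℝ^d, define the exact output o = N/D and the approximate output õ = (N + ((∑_{j∈𝒰} α_j)·H̄ − ∑_{j∈𝒰} α_j·H_j)ᵀ q)/D. Then ‖õ − o‖₂ ≤ C_q · M · ρ / B. -/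

import Mathlib

open Matrix
open scoped RealInnerProductSpace Matrix.Norms.L2Operator

/-!
The error vector is `D⁻¹ • Aᵀ q` with `A = ∑ j ∈ U, α j • (H̄ - H j)`. The triangle inequality
bounds `‖A‖ = ‖Aᵀ‖` by `M * ∑ j ∈ U, α j`, and Jensen's inequality for `exp` turns each
block-centroid exponential into at most the average of the exponentials of its keys, so that
`∑ j ∈ U, α j ≤ τ / B`.
-/

lemma Real.exp_inner_centroid_le {E : Type*} [NormedAddCommGroup E] [InnerProductSpace ℝ E]
    {B : ℕ} (hB : B ≠ 0) (q : E) (k : Fin B → E) (c : ℝ) :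
    Real.exp (⟪q, (B : ℝ)⁻¹ • ∑ n, k n⟫ / c) ≤ (B : ℝ)⁻¹ * ∑ n, Real.exp (⟪q, k n⟫ / c) := by
  have hweights : ∑ _n : Fin B, (B : ℝ)⁻¹ = 1 := by
    simp [Finset.card_univ, hB]
  have hmean : ⟪q, (B : ℝ)⁻¹ • ∑ n, k n⟫ / c = ∑ n, (B : ℝ)⁻¹ • (⟪q, k n⟫ / c) := by
    simp only [real_inner_smul_right, inner_sum, Finset.mul_sum, Finset.sum_div, smul_eq_mul,
      mul_div_assoc]
  rw [hmean, Finset.mul_sum]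
  exact convexOn_exp.map_sum_le (fun _ _ => by positivity) hweights fun _ _ => Set.mem_univ _

lemma norm_sum_smul_le_mul_sum {ι E : Type*} [SeminormedAddCommGroup E] [NormedSpace ℝ E]
    (s : Finset ι) (α : ι → ℝ) (v : ι → E) (M : ℝ) (hα : ∀ j ∈ s, 0 ≤ α j)
    (hv : ∀ j ∈ s, ‖v j‖ ≤ M) :
    ‖∑ j ∈ s, α j • v j‖ ≤ M * ∑ j ∈ s, α j := by
  rw [Finset.mul_sum]
  refine norm_sum_le_of_le s fun j hj => ?_
  rw [norm_smul, Real.norm_of_nonneg (hα j hj), mul_comm]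
  exact mul_le_mul_of_nonneg_right (hv j hj) (hα j hj)

lemma Matrix.l2_opNorm_toEuclideanLin_transpose_le {n : Type*} [Fintype n] [DecidableEq n]
    (A : Matrix n n ℝ) (x : EuclideanSpace ℝ n) :
    ‖toEuclideanLin Aᵀ x‖ ≤ ‖A‖ * ‖x‖ := by
  have hT : ‖Aᵀ‖ = ‖A‖ := by
    rw [← conjTranspose_eq_transpose_of_trivial, l2_opNorm_conjTranspose]
  rw [← hT]
  exact Aᵀ.l2_opNorm_mulVec x

theorem global_first_order_error_general {ι : Type*} (d B : ℕ) (hB : 1 ≤ B)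
    (U : Finset ι) (hU : U.Nonempty)
    (q : EuclideanSpace ℝ (Fin d)) (Cq : ℝ) (hq : ‖q‖ ≤ Cq)
    (k : ι → Fin B → EuclideanSpace ℝ (Fin d))
    (α : ι → ℝ)
    (hα : ∀ j ∈ U, α j = Real.exp (⟪q, (B : ℝ)⁻¹ • (∑ n, k j n)⟫ / Real.sqrt d))
    (H : ι → Matrix (Fin d) (Fin d) ℝ) (Hbar : Matrix (Fin d) (Fin d) ℝ)
    (M : ℝ) (hM : M = U.sup' hU fun j => ‖H j - Hbar‖)
    (D : ℝ) (hD : 0 < D)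
    (τ : ℝ) (hτ : τ = ∑ j ∈ U, ∑ n, Real.exp (⟪q, k j n⟫ / Real.sqrt d))
    (N : EuclideanSpace ℝ (Fin d)) :
    ‖D⁻¹ • (N + Matrix.toEuclideanLin (((∑ j ∈ U, α j) • Hbar - ∑ j ∈ U, α j • H j)ᵀ) q)
        - D⁻¹ • N‖ ≤ Cq * M * (τ / D) / B := by
  have hα0 : ∀ j ∈ U, 0 ≤ α j := fun j hj => hα j hj ▸ (Real.exp_pos _).le
  have hHM : ∀ j ∈ U, ‖Hbar - H j‖ ≤ M := fun j hj => by
    rw [norm_sub_rev, hM]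
    exact Finset.le_sup' (fun j => ‖H j - Hbar‖) hj
  have hM0 : 0 ≤ M := (norm_nonneg _).trans (hHM _ hU.choose_spec)
  have hsumα : ∑ j ∈ U, α j ≤ τ / B := by
    rw [hτ, div_eq_inv_mul, Finset.mul_sum]
    refine Finset.sum_le_sum fun j hj => ?_
    rw [hα j hj]
    exact Real.exp_inner_centroid_le (by omega) q (k j) _
  have hresidual : ‖(∑ j ∈ U, α j) • Hbar - ∑ j ∈ U, α j • H j‖ ≤ M * (τ / B) := by
    rw [Finset.sum_smul, ← Finset.sum_sub_distrib]
    simp_rw [← smul_sub]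
    exact (norm_sum_smul_le_mul_sum U α _ M hα0 hHM).trans
      (mul_le_mul_of_nonneg_left hsumα hM0)
  rw [smul_add, add_sub_cancel_left, norm_smul, Real.norm_of_nonneg (inv_nonneg.2 hD.le)]
  calc D⁻¹ * ‖toEuclideanLin ((∑ j ∈ U, α j) • Hbar - ∑ j ∈ U, α j • H j)ᵀ q‖
      ≤ D⁻¹ * (M * (τ / B) * Cq) := by
        gcongr
        exact (l2_opNorm_toEuclideanLin_transpose_le _ q).trans
          (mul_le_mul hresidual hq (norm_nonneg q) ((norm_nonneg _).trans hresidual))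
    _ = Cq * M * (τ / D) / B := by ring

/-- Error analysis of the global first-order approximation (Theorem 1):
replacing `∑ j ∈ U, α j • H j` by `(∑ j ∈ U, α j) • H̄` in the numerator, while keeping
the same denominator `D`, incurs an output error of at most `C_q * M * ρ / B`,
where `ρ = τ / D` is the tail fraction. -/
theorem global_first_order_error {ι : Type*} (d B : ℕ) (hd : 1 ≤ d) (hB : 1 ≤ B)
    (U : Finset ι) (hU : U.Nonempty)
    (q : EuclideanSpace ℝ (Fin d)) (Cq : ℝ) (hCq : 0 < Cq) (hq : ‖q‖ ≤ Cq)
    (k : ι → Fin B → EuclideanSpace ℝ (Fin d))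
    (α : ι → ℝ)
    (hα : ∀ j ∈ U, α j = Real.exp (⟪q, (B : ℝ)⁻¹ • (∑ n, k j n)⟫ / Real.sqrt d))
    (H : ι → Matrix (Fin d) (Fin d) ℝ) (Hbar : Matrix (Fin d) (Fin d) ℝ)
    (M : ℝ) (hM : M = U.sup' hU fun j => ‖H j - Hbar‖)
    (D : ℝ) (hD : 0 < D)
    (τ : ℝ) (hτ : τ = ∑ j ∈ U, ∑ n, Real.exp (⟪q, k j n⟫ / Real.sqrt d))
    (hτD : τ ≤ D)
    (N : EuclideanSpace ℝ (Fin d)) :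
    ‖D⁻¹ • (N + Matrix.toEuclideanLin (((∑ j ∈ U, α j) • Hbar - ∑ j ∈ U, α j • H j)ᵀ) q)
        - D⁻¹ • N‖ ≤ Cq * M * (τ / D) / B :=
  global_first_order_error_general d B hB U hU q Cq hq k α hα H Hbar M hM D hD τ hτ N
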